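/- arXiv:1109.5310 — 5 statements merged into one kernel-verified Lean document; each statement's English description precedes it below -/
import Mathlib

section
/- For any n ∈ ℕ, d ≥ 0, and any set H ⊆ ℝⁿ, H is ℋ^d-measurable if and only if H ∩ B is ℋ^d-measurable for every Borel set B ⊆ ℝⁿ with 0 < ℋ^d(B) < ∞. -/
open MeasureTheory Set

noncomputable section

/-- Carathéodory measurability with respect to `d`-dimensional Hausdorff measure. -/
def HMeas (n : ℕ) (d : ℝ) (H : Set (EuclideanSpace ℝ (Fin n))) : Prop :=
  ∀ X : Set (EuclideanSpace ℝ (Fin n)),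
    μH[d] (X ∩ H) + μH[d] (X \ H) = μH[d] X

namespace MeasureTheory.Measure

variable {α : Type*} [MeasurableSpace α] (μ : Measure α)

theorem isCaratheodory_inter_of_measurableSet {H B : Set α}
    (hH : μ.toOuterMeasure.IsCaratheodory H) (hB : MeasurableSet B) :
    μ.toOuterMeasure.IsCaratheodory (H ∩ B) :=
  OuterMeasure.isCaratheodory_inter _ hH (le_toOuterMeasure_caratheodory μ B hB)

/-- Carathéodory's criterion only needs to be tested on sets of positive finite measure, and on
such a set `t` the measurable hull `B ⊇ t` turns the splitting by `H ∩ B` into the splitting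
by `H`. -/
theorem isCaratheodory_of_forall_inter {H : Set α}
    (h : ∀ B, MeasurableSet B → 0 < μ B → μ B < ⊤ →
      μ.toOuterMeasure.IsCaratheodory (H ∩ B)) :
    μ.toOuterMeasure.IsCaratheodory H := by
  refine (OuterMeasure.isCaratheodory_iff_le' _).2 fun t => ?_
  change μ (t ∩ H) + μ (t \ H) ≤ μ t
  rcases eq_or_ne (μ t) ⊤ with htop | hfin
  · exact htop ▸ le_top
  rcases eq_or_ne (μ t) 0 with hzero | hpos
  · rw [measure_mono_null inter_subset_left hzero, measure_mono_null sdiff_subset hzero, add_zero]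
    exact zero_le
  set B := toMeasurable μ t
  have htB : t ⊆ B := subset_toMeasurable μ t
  have hsplit := h B (measurableSet_toMeasurable μ t)
    ((measure_toMeasurable t).symm ▸ pos_iff_ne_zero.2 hpos)
    ((measure_toMeasurable t).symm ▸ hfin.lt_top) t
  have hinter : t ∩ (H ∩ B) = t ∩ H := by
    rw [← inter_assoc, inter_eq_left.2 (inter_subset_left.trans htB)]
  have hdiff : t \ (H ∩ B) = t \ H := by
    rw [sdiff_inter, sdiff_eq_empty.2 htB, union_empty]
  rw [hinter, hdiff] at hsplit
  exact hsplit.ge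

theorem isCaratheodory_iff_forall_inter (H : Set α) :
    μ.toOuterMeasure.IsCaratheodory H ↔
      ∀ B, MeasurableSet B → 0 < μ B → μ B < ⊤ → μ.toOuterMeasure.IsCaratheodory (H ∩ B) :=
  ⟨fun hH _ hB _ _ => isCaratheodory_inter_of_measurableSet μ hH hB,
    isCaratheodory_of_forall_inter μ⟩

end MeasureTheory.Measure

theorem hMeas_iff_isCaratheodory (n : ℕ) (d : ℝ) (H : Set (EuclideanSpace ℝ (Fin n))) :
    HMeas n d H ↔ (μH[d]).toOuterMeasure.IsCaratheodory H :=
  forall_congr' fun _ => eq_comm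

theorem stmt1_general (n : ℕ) (d : ℝ) (H : Set (EuclideanSpace ℝ (Fin n))) :
    HMeas n d H ↔
      ∀ B : Set (EuclideanSpace ℝ (Fin n)), MeasurableSet B →
        0 < μH[d] B → μH[d] B < ⊤ → HMeas n d (H ∩ B) := by
  simp only [hMeas_iff_isCaratheodory]
  exact Measure.isCaratheodory_iff_forall_inter _ H

theorem stmt1 (n : ℕ) (d : ℝ) (hd : 0 ≤ d) (H : Set (EuclideanSpace ℝ (Fin n))) :
    HMeas n d H ↔
      ∀ B : Set (EuclideanSpace ℝ (Fin n)), MeasurableSet B →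
        0 < μH[d] B → μH[d] B < ⊤ → HMeas n d (H ∩ B) :=
  stmt1_general n d H
end
end

section
/- Assume the Continuum Hypothesis and let 0 < d < n. Then there exists a family {B_α : α < ω₁} of pairwise disjoint Borel subsets of ℝⁿ, each of finite ℋ^d-measure, such that a set H ⊆ ℝⁿ is ℋ^d-measurable if and only if H ∩ B_α is ℋ^d-measurable for every α < ω₁. -/
open MeasureTheory Set

noncomputable section

/-- The ordinals below `ω₁`. -/
abbrev Omega1 : Type 1 := {o : Ordinal // o < (Cardinal.aleph 1).ord}

/-!
Under CH there are only `ℵ₁` measurable sets of finite measure; list them as `C α`, `α < ω₁`,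
and disjointify transfinitely, `B α = C α \ ⋃ β < α, C β`. Initial segments of `ω₁` are
countable, so each `B α` is Borel. Conversely, if every `H ∩ B α` is Carathéodory measurable,
test `H` against a set `X` of finite measure: its measurable hull is some `C α`, covered by the
countably many `B β`, `β ≤ α`, so on `X` the set `H` agrees with the Carathéodory measurable
countable union of the `H ∩ B β`. Test sets of infinite measure need nothing.
-/

open Cardinal

universe u

namespace Omega1

lemma mk_eq : #Omega1 = lift.{1} (ℵ₁ : Cardinal.{0}) := by
  have := mk_Iio_ordinal (ℵ₁ : Cardinal.{0}).ord
  rwa [card_ord] at this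

lemma countable_Iio (α : Omega1) : (Iio α).Countable := by
  have hα : (Iio α.1).Countable := by
    rw [← le_aleph0_iff_set_countable, mk_Iio_ordinal, lift_le_aleph0, ← lt_aleph_one_iff]
    exact lt_ord.mp α.2
  exact hα.preimage Subtype.val_injective

lemma countable_Iic (α : Omega1) : (Iic α).Countable := by
  rw [← Iio_insert]
  exact (countable_Iio α).insert α

lemma exists_surjective_of_mk_le_continuum (hCH : Cardinal.continuum.{u} = ℵ₁) {S : Type}
    [Nonempty S] (hS : #S ≤ 𝔠) : ∃ f : Omega1 → S, Function.Surjective f := by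
  have hCH₀ : Cardinal.continuum.{0} = ℵ₁ := by
    rw [← lift_inj.{0, u}]
    simpa using hCH
  have hle : lift.{1} #S ≤ lift.{0} #Omega1 := by
    rw [lift_uzero, mk_eq, ← hCH₀]
    exact lift_le.mpr hS
  obtain ⟨g⟩ := lift_mk_le'.mp hle
  exact ⟨Function.invFun g, Function.invFun_surjective g.injective⟩

end Omega1

section TransfiniteDisjointed

variable {ι α : Type*} [LinearOrder ι] (C : ι → Set α)

def transfiniteDisjointed (i : ι) : Set α := C i \ ⋃ j < i, C j

lemma transfiniteDisjointed_subset (i : ι) : transfiniteDisjointed C i ⊆ C i := sdiff_subset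

lemma pairwise_disjoint_transfiniteDisjointed :
    Pairwise (Function.onFun Disjoint (transfiniteDisjointed C)) := by
  have h_lt : ∀ i j, j < i → Disjoint (transfiniteDisjointed C i) (transfiniteDisjointed C j) :=
    fun i j hji => disjoint_left.mpr fun x hxi hxj => hxi.2 (mem_biUnion hji hxj.1)
  intro i j hij
  rcases hij.lt_or_gt with h | h
  · exact (h_lt j i h).symm
  · exact h_lt i j h

lemma subset_biUnion_Iic_transfiniteDisjointed [WellFoundedLT ι] (i : ι) :
    C i ⊆ ⋃ j ∈ Iic i, transfiniteDisjointed C j := by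
  intro x hx
  obtain ⟨j, hxj, hj_min⟩ := wellFounded_lt.has_min {k | x ∈ C k} ⟨i, hx⟩
  refine mem_biUnion (not_lt.mp (hj_min i hx)) ⟨hxj, ?_⟩
  simp only [mem_iUnion, not_exists]
  exact fun k hk hxk => hj_min k hxk hk

lemma MeasurableSet.transfiniteDisjointed [MeasurableSpace α] {i : ι}
    (hC : ∀ j, MeasurableSet (C j)) (hi : (Iio i).Countable) :
    MeasurableSet (transfiniteDisjointed C i) :=
  (hC i).diff (.biUnion hi fun j _ => hC j)

end TransfiniteDisjointed

lemma MeasurableSpace.mk_measurableSet_le_continuum (α : Type*) [MeasurableSpace α]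
    [MeasurableSpace.CountablyGenerated α] : #{t : Set α | MeasurableSet t} ≤ 𝔠 := by
  rw [← generateFrom_countableGeneratingSet (α := α)]
  exact cardinal_measurableSet_le_continuum
    (mk_le_aleph0_iff.mpr countable_countableGeneratingSet.to_subtype |>.trans aleph0_le_continuum)

lemma MeasureTheory.Measure.exists_omega1_enumeration_of_lt_top
    (hCH : Cardinal.continuum.{u} = ℵ₁) {α : Type} [MeasurableSpace α]
    [MeasurableSpace.CountablyGenerated α] (μ : Measure α) :
    ∃ C : Omega1 → Set α, (∀ i, MeasurableSet (C i) ∧ μ (C i) < ⊤) ∧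
      ∀ t, MeasurableSet t → μ t < ⊤ → ∃ i, C i = t := by
  let S := {t : Set α // MeasurableSet t ∧ μ t < ⊤}
  have : Nonempty S := ⟨⟨∅, .empty, by simp⟩⟩
  have hS : #S ≤ 𝔠 := (mk_subtype_mono fun _ ht => ht.1).trans
    (MeasurableSpace.mk_measurableSet_le_continuum α)
  obtain ⟨f, hf⟩ := Omega1.exists_surjective_of_mk_le_continuum hCH hS
  exact ⟨fun i => (f i).1, fun i => (f i).2, fun t ht hμt =>
    (hf ⟨t, ht, hμt⟩).imp fun i hi => congrArg Subtype.val hi⟩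

lemma MeasureTheory.Measure.measurableSet_caratheodory_iff_forall_inter {ι α : Type*}
    [MeasurableSpace α] (μ : Measure α) {B : ι → Set α} (hB : ∀ i, MeasurableSet (B i))
    (hcover : ∀ t, MeasurableSet t → μ t < ⊤ → ∃ S : Set ι, S.Countable ∧ t ⊆ ⋃ i ∈ S, B i)
    (H : Set α) :
    MeasurableSet[μ.toOuterMeasure.caratheodory] H ↔
      ∀ i, MeasurableSet[μ.toOuterMeasure.caratheodory] (H ∩ B i) := by
  refine ⟨fun hH i => hH.inter (le_toOuterMeasure_caratheodory μ _ (hB i)), fun hHB => ?_⟩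
  refine (OuterMeasure.isCaratheodory_iff_le _).mpr fun X => ?_
  rcases eq_top_or_lt_top (μ X) with hX | hX
  · simp [hX]
  obtain ⟨S, hS, hXS⟩ := hcover (toMeasurable μ X) (measurableSet_toMeasurable μ X)
    (by rwa [measure_toMeasurable])
  have hX_sub : X ⊆ ⋃ i ∈ S, B i := (subset_toMeasurable μ X).trans hXS
  have hHU : MeasurableSet[μ.toOuterMeasure.caratheodory] (H ∩ ⋃ i ∈ S, B i) := by
    rw [inter_iUnion₂]
    exact .biUnion hS fun i _ => hHB i
  have h_inter : X ∩ (H ∩ ⋃ i ∈ S, B i) = X ∩ H := by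
    rw [inter_comm H, ← inter_assoc, inter_eq_left.mpr hX_sub]
  have h_diff : X \ (H ∩ ⋃ i ∈ S, B i) = X \ H := by
    rw [sdiff_inter, sdiff_eq_empty.mpr hX_sub, union_empty]
  simpa only [h_inter, h_diff] using (OuterMeasure.isCaratheodory_iff_le _).mp hHU X

lemma hMeas_iff_measurableSet_caratheodory (n : ℕ) (d : ℝ) (H : Set (EuclideanSpace ℝ (Fin n))) :
    HMeas n d H ↔
      MeasurableSet[(μH[d] : Measure (EuclideanSpace ℝ (Fin n))).toOuterMeasure.caratheodory] H :=
  forall_congr' fun _ => eq_comm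

theorem stmt6_general (n : ℕ) (d : ℝ)
    (hCH : Cardinal.continuum = Cardinal.aleph 1) :
    ∃ B : Omega1 → Set (EuclideanSpace ℝ (Fin n)),
      Pairwise (Function.onFun Disjoint B) ∧
      (∀ α, MeasurableSet (B α) ∧ μH[d] (B α) < ⊤) ∧
      (∀ H : Set (EuclideanSpace ℝ (Fin n)),
        HMeas n d H ↔ ∀ α, HMeas n d (H ∩ B α)) := by
  obtain ⟨C, hC, hC_surj⟩ :=
    (μH[d] : Measure (EuclideanSpace ℝ (Fin n))).exists_omega1_enumeration_of_lt_top hCH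
  have hB : ∀ α, MeasurableSet (transfiniteDisjointed C α) := fun α =>
    .transfiniteDisjointed C (fun β => (hC β).1) (Omega1.countable_Iio α)
  refine ⟨transfiniteDisjointed C, pairwise_disjoint_transfiniteDisjointed C,
    fun α => ⟨hB α, (measure_mono (transfiniteDisjointed_subset C α)).trans_lt (hC α).2⟩,
    fun H => ?_⟩
  simp only [hMeas_iff_measurableSet_caratheodory]
  refine Measure.measurableSet_caratheodory_iff_forall_inter _ hB (fun t ht hμt => ?_) H
  obtain ⟨α, rfl⟩ := hC_surj t ht hμt
  exact ⟨Iic α, Omega1.countable_Iic α, subset_biUnion_Iic_transfiniteDisjointed C α⟩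

theorem stmt6 (n : ℕ) (d : ℝ) (hd : 0 < d) (hdn : d < n)
    (hCH : Cardinal.continuum = Cardinal.aleph 1) :
    ∃ B : Omega1 → Set (EuclideanSpace ℝ (Fin n)),
      Pairwise (Function.onFun Disjoint B) ∧
      (∀ α, MeasurableSet (B α) ∧ μH[d] (B α) < ⊤) ∧
      (∀ H : Set (EuclideanSpace ℝ (Fin n)),
        HMeas n d H ↔ ∀ α, HMeas n d (H ∩ B α)) :=
  stmt6_general n d hCH
end
end

section
/- Fix 0 < α ≤ 1. The set of functions f ∈ C[0,1] such that f is not Hölder continuous of exponent α on any set H ⊆ [0,1] of Hausdorff dimension greater than 1 − α is residual (comeager) in C[0,1] with the supremum norm. Equivalently, for a typical continuous f: for every g : [0,1] → ℝ Hölder continuous of exponent α, the set {x : f(x) = g(x)} has Hausdorff dimension at most 1 − α. -/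
/-!
Fix `K` and `d > 1 - α`. If on each interval `[i/N, (i+1)/N]` the function `f` moves by more than
`K |x - y| ^ α + η` between any two points at distance at least `r`, then `f` can agree with a
`K`-Hölder function `g` only on a set meeting each interval in diameter `< r`; so `{f = g}` is
covered by `N` sets of diameter `≤ r`, and when `N r ^ d` is small so is `μH[d] {f = g}`.
The condition is open (it has the margin `η`), and it is dense: adding `a W(N x)`, with `W` a
triangle wave of slope `±1`, to a `C`-Lipschitz approximant gives slope at least `a N - C` on each
interval, which beats `K |x - y| ^ α` at all scales `≥ r = N ^ (-s)` as soon as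
`s (1 - α) < 1`, while `N r ^ d → 0` as soon as `s d > 1`. Baire's theorem then gives a typical
`f` with `μH[d] {f = g} = 0` for every Hölder `g` and every `d > 1 - α`.
-/

open MeasureTheory Set

noncomputable section

/-- The unit interval, as a subset of `ℝ`. -/
abbrev I01 : Set ℝ := Set.Icc (0 : ℝ) 1

open Metric Filter Topology
open scoped NNReal ENNReal

def triangleWave (x : ℝ) : ℝ := infDist x (range fun k : ℤ => 2 * (k : ℝ) + 1)

lemma lipschitzWith_triangleWave : LipschitzWith 1 triangleWave := lipschitz_infDist_pt _

lemma triangleWave_nonneg (x : ℝ) : 0 ≤ triangleWave x := infDist_nonneg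

lemma triangleWave_le_abs (x : ℝ) (k : ℤ) : triangleWave x ≤ |x - (2 * k + 1)| := by
  rw [← Real.dist_eq]
  exact infDist_le_dist_of_mem (mem_range_self k)

lemma triangleWave_le_one (x : ℝ) : triangleWave x ≤ 1 := by
  refine (triangleWave_le_abs x ⌊x / 2⌋).trans (abs_le.2 ⟨?_, ?_⟩) <;>
    linarith [Int.floor_le (x / 2), Int.lt_floor_add_one (x / 2)]

lemma triangleWave_eq_abs {k : ℤ} {x : ℝ} (hx : |x - (2 * k + 1)| ≤ 1) :
    triangleWave x = |x - (2 * k + 1)| := by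
  refine le_antisymm (triangleWave_le_abs x k) ((le_infDist (range_nonempty _)).2 ?_)
  rintro _ ⟨j, rfl⟩
  rw [Real.dist_eq]
  obtain ⟨hxl, hxu⟩ := abs_le.1 hx
  rcases lt_trichotomy j k with hjk | rfl | hjk
  · have : (j : ℝ) + 1 ≤ k := by exact_mod_cast hjk
    exact hx.trans (le_abs.2 (Or.inl (by linarith)))
  · rfl
  · have : (k : ℝ) + 1 ≤ j := by exact_mod_cast hjk
    exact hx.trans (le_abs.2 (Or.inr (by linarith)))

lemma abs_triangleWave_sub {j : ℤ} {x y : ℝ} (hx : x ∈ Icc (j : ℝ) (j + 1))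
    (hy : y ∈ Icc (j : ℝ) (j + 1)) : |triangleWave x - triangleWave y| = |x - y| := by
  obtain ⟨k, rfl | rfl⟩ := Int.even_or_odd' j <;> push_cast at hx hy <;>
    rw [triangleWave_eq_abs (k := k) (abs_le.2 ⟨by linarith [hx.1], by linarith [hx.2]⟩),
      triangleWave_eq_abs (k := k) (abs_le.2 ⟨by linarith [hy.1], by linarith [hy.2]⟩)]
  · rw [abs_of_nonpos (a := x - _) (by linarith [hx.2]),
      abs_of_nonpos (a := y - _) (by linarith [hy.2]), ← abs_neg]
    congr 1; ring
  · rw [abs_of_nonneg (a := x - _) (by linarith [hx.1]),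
      abs_of_nonneg (a := y - _) (by linarith [hy.1])]
    congr 1; ring

lemma exists_natCast_mul_mem_Icc {N : ℕ} (hN : 0 < N) {x : ℝ} (hx : x ∈ I01) :
    ∃ i < N, (N : ℝ) * x ∈ Icc (i : ℝ) (i + 1) := by
  have hNx : 0 ≤ (N : ℝ) * x := mul_nonneg N.cast_nonneg hx.1
  rcases hx.2.lt_or_eq with hx1 | rfl
  · refine ⟨⌊(N : ℝ) * x⌋₊, (Nat.floor_lt hNx).2 ?_, Nat.floor_le hNx,
      (Nat.lt_floor_add_one _).le⟩
    exact mul_lt_of_lt_one_right (by exact_mod_cast hN) hx1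
  · refine ⟨N - 1, Nat.sub_lt hN one_pos, ?_⟩
    rw [Nat.cast_pred hN, mul_one]
    constructor <;> linarith

lemma exists_lipschitzWith_dist_lt (f : C(I01, ℝ)) {ε : ℝ} (hε : 0 < ε) :
    ∃ (p : C(I01, ℝ)) (C : ℝ≥0), LipschitzWith C p ∧ dist p f < ε := by
  obtain ⟨p, hp⟩ := exists_polynomial_near_continuousMap 0 1 f ε hε
  have hp' : ContDiff ℝ 1 (fun x : ℝ => p.eval x) := by
    simpa using p.contDiff_aeval (𝕜 := ℝ) 1
  obtain ⟨C, hC⟩ := hp'.locallyLipschitz.locallyLipschitzOn.exists_lipschitzOnWith_of_compact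
    (isCompact_Icc (a := 0) (b := 1))
  exact ⟨_, C, hC.to_restrict, by rwa [dist_eq_norm]⟩

lemma exists_dist_le_forall_mul_abs_sub_le (p : C(I01, ℝ)) {C : ℝ≥0} (hp : LipschitzWith C p)
    {a : ℝ} (ha : 0 ≤ a) (N : ℕ) :
    ∃ f : C(I01, ℝ), dist f p ≤ a ∧ ∀ (i : ℕ) (x y : I01),
      (N : ℝ) * x ∈ Icc (i : ℝ) (i + 1) → (N : ℝ) * y ∈ Icc (i : ℝ) (i + 1) →
      (a * N - C) * |x.1 - y.1| ≤ |f x - f y| := by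
  let w : C(I01, ℝ) := ⟨fun x => triangleWave (N * x),
    lipschitzWith_triangleWave.continuous.comp (by fun_prop)⟩
  refine ⟨p + a • w, ?_, fun i x y hx hy => ?_⟩
  · rw [dist_eq_norm, add_sub_cancel_left, ContinuousMap.norm_le _ ha]
    intro x
    simp only [ContinuousMap.smul_apply, smul_eq_mul, norm_mul, Real.norm_eq_abs,
      abs_of_nonneg ha, w, ContinuousMap.coe_mk, abs_of_nonneg (triangleWave_nonneg _)]
    exact mul_le_of_le_one_right ha (triangleWave_le_one _)
  · have hw : |w x - w y| = N * |x.1 - y.1| := by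
      simp only [w, ContinuousMap.coe_mk]
      rw [abs_triangleWave_sub (j := i) (by exact_mod_cast hx) (by exact_mod_cast hy), ← mul_sub,
        abs_mul, Nat.abs_cast]
    have hpxy : |p x - p y| ≤ C * |x.1 - y.1| := by
      simpa [Real.dist_eq, Subtype.dist_eq] using hp.dist_le_mul x y
    have hsplit : (p + a • w) x - (p + a • w) y = a * (w x - w y) + (p x - p y) := by
      simp only [ContinuousMap.add_apply, ContinuousMap.smul_apply, smul_eq_mul]; ring
    rw [hsplit]
    calc (a * N - C) * |x.1 - y.1| = |a * (w x - w y)| - C * |x.1 - y.1| := by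
          rw [abs_mul, hw, abs_of_nonneg ha]; ring
    _ ≤ |a * (w x - w y)| - |p x - p y| := by linarith
    _ ≤ |a * (w x - w y) + (p x - p y)| := abs_sub_abs_le_abs_add _ _

lemma mul_rpow_add_rpow_le_mul {α K L r s : ℝ} (hα : 0 ≤ α) (hα1 : α ≤ 1) (hK : 0 ≤ K)
    (hr : 0 < r) (hrs : r ≤ s) (hL : K + 1 ≤ L * r ^ (1 - α)) : K * s ^ α + r ^ α ≤ L * s := by
  have hs : 0 < s := hr.trans_le hrs
  have hL0 : 0 ≤ L := by
    have := hL.trans' (by linarith : (0 : ℝ) ≤ K + 1)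
    exact nonneg_of_mul_nonneg_left this (Real.rpow_pos_of_pos hr _)
  calc K * s ^ α + r ^ α ≤ (K + 1) * s ^ α := by
        linarith [Real.rpow_le_rpow hr.le hrs hα]
  _ ≤ L * r ^ (1 - α) * s ^ α := by gcongr
  _ ≤ L * s ^ (1 - α) * s ^ α := by gcongr
  _ = L * s := by rw [mul_assoc, ← Real.rpow_add hs]; norm_num

lemma exists_nat_rpow_scale {a C A ε β d : ℝ} (ha : 0 < a) (hC : 0 ≤ C) (hε : 0 < ε)
    (hβ : 0 ≤ β) (hβd : β < d) :
    ∃ N : ℕ, 0 < N ∧ ∃ r > 0, r ≤ ε ∧ N * r ^ d ≤ ε ∧ A ≤ (a * N - C) * r ^ β := by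
  -- `r = N ^ (-s)` with `s β < 1 < s d`.
  set s := 2 / (β + d)
  have hs : 0 < s := div_pos two_pos (by linarith)
  have hsd : 1 < s * d := by rw [div_mul_eq_mul_div, one_lt_div (by linarith)]; linarith
  have hsβ : s * β < 1 := by rw [div_mul_eq_mul_div, div_lt_one (by linarith)]; linarith
  have hsmall : ∀ {t : ℝ}, 0 < t → ∀ᶠ x : ℝ in atTop, x ^ (-t) ≤ ε := fun ht =>
    (tendsto_rpow_neg_atTop ht).eventually (ge_mem_nhds hε)
  have hlarge : ∀ᶠ x : ℝ in atTop, A + C ≤ a * x ^ (1 - s * β) :=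
    ((tendsto_rpow_atTop (by linarith)).const_mul_atTop ha).eventually_ge_atTop _
  have hx : ∀ᶠ x : ℝ in atTop, 1 ≤ x ∧ x ^ (-s) ≤ ε ∧ x * (x ^ (-s)) ^ d ≤ ε ∧
      A ≤ (a * x - C) * (x ^ (-s)) ^ β := by
    filter_upwards [eventually_ge_atTop 1, hsmall hs, hsmall (t := s * d - 1) (by linarith),
      hlarge] with x hx1 hxs hxd hxβ
    have hx0 : 0 < x := one_pos.trans_le hx1
    have hpow : ∀ t, x * (x ^ (-s)) ^ t = x ^ (1 - s * t) := fun t => by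
      rw [← Real.rpow_mul hx0.le, sub_eq_add_neg, Real.rpow_add hx0, Real.rpow_one, neg_mul]
    refine ⟨hx1, hxs, by rwa [hpow, show 1 - s * d = -(s * d - 1) by ring], ?_⟩
    have hle : (x ^ (-s)) ^ β ≤ 1 := by
      rw [← Real.rpow_mul hx0.le]
      exact Real.rpow_le_one_of_one_le_of_nonpos hx1 (by nlinarith)
    nlinarith [hpow β]
  obtain ⟨N, hN1, hNs, hNd, hNβ⟩ := (tendsto_natCast_atTop_atTop.eventually hx).exists
  exact ⟨N, Nat.one_le_cast.1 hN1, _, Real.rpow_pos_of_pos (by linarith) _, hNs, hNd, hNβ⟩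

/-- `(N : ℝ) * x ∈ Icc i (i + 1)` encodes `x ∈ [i / N, (i + 1) / N]`. -/
def steepSet (α d ε K : ℝ) : Set C(I01, ℝ) :=
  {f | ∃ N : ℕ, 0 < N ∧ ∃ r > 0, ∃ η > 0, r ≤ ε ∧ N * r ^ d ≤ ε ∧
    ∀ (i : ℕ) (x y : I01), (N : ℝ) * x ∈ Icc (i : ℝ) (i + 1) → (N : ℝ) * y ∈ Icc (i : ℝ) (i + 1) →
      r ≤ |x.1 - y.1| → K * |x.1 - y.1| ^ α + η ≤ |f x - f y|}

lemma isOpen_steepSet (α d ε K : ℝ) : IsOpen (steepSet α d ε K) := by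
  refine Metric.isOpen_iff.2 fun f ⟨N, hN, r, hr, η, hη, hrε, hNr, hf⟩ => ?_
  refine ⟨η / 4, by positivity, fun f' hf' => ⟨N, hN, r, hr, η / 2, by positivity, hrε, hNr,
    fun i x y hx hy hxy => ?_⟩⟩
  have hclose : ∀ z, |f z - f' z| < η / 4 := fun z => by
    rw [← Real.dist_eq, dist_comm]
    exact (ContinuousMap.dist_apply_le_dist z).trans_lt (mem_ball.1 hf')
  have := abs_add_three (f' x - f' y) (f x - f' x) (f' y - f y)
  rw [show f' x - f' y + (f x - f' x) + (f' y - f y) = f x - f y by ring, abs_sub_comm (f' y)] at this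
  linarith [hf i x y hx hy hxy, hclose x, hclose y]

lemma dense_steepSet {α d ε K : ℝ} (hα : 0 ≤ α) (hα1 : α ≤ 1) (hd : 1 - α < d) (hε : 0 < ε)
    (hK : 0 ≤ K) : Dense (steepSet α d ε K) := by
  refine Metric.dense_iff.2 fun f₀ δ hδ => ?_
  obtain ⟨p, C, hpC, hp⟩ := exists_lipschitzWith_dist_lt f₀ (half_pos hδ)
  obtain ⟨N, hN, r, hr, hrε, hNr, hL⟩ := exists_nat_rpow_scale (A := K + 1) (half_pos hδ)
    C.coe_nonneg hε (sub_nonneg.2 hα1) hd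
  obtain ⟨f, hfp, hf⟩ := exists_dist_le_forall_mul_abs_sub_le p hpC (half_pos hδ).le N
  refine ⟨f, ?_, N, hN, r, hr, r ^ α, Real.rpow_pos_of_pos hr α, hrε, hNr,
    fun i x y hx hy hxy => ?_⟩
  · rw [mem_ball]
    linarith [dist_triangle f p f₀]
  · exact (mul_rpow_add_rpow_le_mul hα hα1 hK hr hxy hL).trans (hf i x y hx hy)

lemma hausdorffMeasure_eq_zero_of_forall_cover {X : Type*} [EMetricSpace X] [MeasurableSpace X]
    [BorelSpace X] {d : ℝ} (hd : 0 ≤ d) {s : Set X}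
    (h : ∀ ε > 0, ∃ (N : ℕ) (r : ℝ), 0 ≤ r ∧ r ≤ ε ∧ N * r ^ d ≤ ε ∧
      ∃ t : Fin N → Set X, s ⊆ ⋃ i, t i ∧ ∀ i, ediam (t i) ≤ ENNReal.ofReal r) :
    μH[d] s = 0 := by
  choose N r hr hrε hNr t hst ht using fun m : ℕ => h (1 / (m + 1)) (by positivity)
  have hlim : Tendsto (fun m : ℕ => ENNReal.ofReal (1 / (m + 1))) atTop (𝓝 0) := by
    simpa using ENNReal.tendsto_ofReal tendsto_one_div_add_atTop_nhds_zero_nat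
  have hsum : ∀ m, ∑ i, ediam (t m i) ^ d ≤ ENNReal.ofReal (1 / (m + 1)) := fun m =>
    calc ∑ i, ediam (t m i) ^ d ≤ ∑ _i : Fin (N m), ENNReal.ofReal (r m) ^ d :=
          Finset.sum_le_sum fun i _ => ENNReal.rpow_le_rpow (ht m i) hd
    _ = ENNReal.ofReal (N m * r m ^ d) := by
          rw [Finset.sum_const, Finset.card_univ, Fintype.card_fin, nsmul_eq_mul,
            ENNReal.ofReal_rpow_of_nonneg (hr m) hd, ENNReal.ofReal_mul (by positivity),
            ENNReal.ofReal_natCast]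
    _ ≤ ENNReal.ofReal (1 / (m + 1)) := ENNReal.ofReal_le_ofReal (hNr m)
  refine le_antisymm ?_ zero_le
  calc μH[d] s ≤ liminf (fun m => ∑ i, ediam (t m i) ^ d) atTop :=
        Measure.hausdorffMeasure_le_liminf_sum d s _ hlim t
          (Eventually.of_forall fun m i => (ht m i).trans (ENNReal.ofReal_le_ofReal (hrε m)))
          (Eventually.of_forall hst)
  _ ≤ liminf (fun m : ℕ => ENNReal.ofReal (1 / (m + 1))) atTop :=
        liminf_le_liminf (Eventually.of_forall hsum)
  _ = 0 := hlim.liminf_eq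

lemma dimH_le_ofReal_of_hausdorffMeasure_eq_zero {X : Type*} [EMetricSpace X]
    [MeasurableSpace X] [BorelSpace X] {s : Set X} {D : ℝ} (hD : 0 ≤ D)
    (h : ∀ j : ℕ, μH[D + 1 / (j + 1)] s = 0) : dimH s ≤ ENNReal.ofReal D := by
  have hlim : Tendsto (fun j : ℕ => ENNReal.ofReal (D + 1 / (j + 1))) atTop
      (𝓝 (ENNReal.ofReal D)) := by
    simpa using ENNReal.tendsto_ofReal (tendsto_one_div_add_atTop_nhds_zero_nat.const_add D)
  refine ge_of_tendsto' hlim fun j => dimH_le_of_hausdorffMeasure_ne_top ?_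
  rw [Real.coe_toNNReal _ (by positivity), h j]
  exact ENNReal.zero_ne_top

lemma hausdorffMeasure_setOf_eq_eq_zero {α d K : ℝ} (hd : 0 ≤ d) {f : C(I01, ℝ)}
    (hf : ∀ n : ℕ, f ∈ steepSet α d (1 / (n + 1)) K) {g : I01 → ℝ}
    (hg : ∀ x y : I01, |g x - g y| ≤ K * |x.1 - y.1| ^ α) : μH[d] {x | f x = g x} = 0 := by
  refine hausdorffMeasure_eq_zero_of_forall_cover hd fun ε hε => ?_
  obtain ⟨n, hn⟩ := exists_nat_one_div_lt hε
  obtain ⟨N, hN, r, hr, η, hη, hrε, hNr, hsteep⟩ := hf n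
  refine ⟨N, r, hr.le, hrε.trans hn.le, hNr.trans hn.le,
    fun i => {x | f x = g x ∧ (N : ℝ) * x ∈ Icc (i : ℝ) (i + 1)}, fun x hx => ?_, fun i => ?_⟩
  · obtain ⟨i, hi, hxi⟩ := exists_natCast_mul_mem_Icc hN x.2
    exact mem_iUnion.2 ⟨⟨i, hi⟩, hx, hxi⟩
  · refine ediam_le fun x ⟨hfx, hx⟩ y ⟨hfy, hy⟩ => ?_
    rw [edist_dist, Subtype.dist_eq, Real.dist_eq]
    refine ENNReal.ofReal_le_ofReal (not_lt.1 fun hxy => ?_)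
    have := hsteep i x y hx hy hxy.le
    rw [hfx, hfy] at this
    linarith [hg x y]

/-- A typical continuous function on `[0,1]` is not Hölder continuous of exponent `α`
on any set of Hausdorff dimension larger than `1 - α`. -/
theorem stmt12 (α : ℝ) (h0 : 0 < α) (h1 : α ≤ 1) :
    { f : C(I01, ℝ) | ∀ g : I01 → ℝ,
        (∃ K : ℝ, ∀ x y : I01, |g x - g y| ≤ K * |x.1 - y.1| ^ α) →
        dimH {x : I01 | f x = g x} ≤ ENNReal.ofReal (1 - α) } ∈
      residual C(I01, ℝ) := by
  have hsteep : (⋂ (K : ℕ) (j : ℕ) (n : ℕ),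
      steepSet α (1 - α + 1 / (j + 1)) (1 / (n + 1)) K) ∈ residual C(I01, ℝ) := by
    simp only [countable_iInter_mem]
    exact fun K j n => residual_of_dense_open (isOpen_steepSet _ _ _ _)
      (dense_steepSet h0.le h1 (by simp only [lt_add_iff_pos_right]; positivity) (by positivity)
        K.cast_nonneg)
  filter_upwards [hsteep] with f hf g ⟨K, hg⟩
  simp only [mem_iInter] at hf
  refine dimH_le_ofReal_of_hausdorffMeasure_eq_zero (sub_nonneg.2 h1) fun j =>
    hausdorffMeasure_setOf_eq_eq_zero (by linarith [Nat.one_div_pos_of_nat (α := ℝ) (n := j)])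
      (hf ⌈K⌉₊ j) fun x y => (hg x y).trans ?_
  gcongr
  exact Nat.le_ceil K
end
end

section
/- For all positive integers N and M, the set of f ∈ C[0,1] such that ℋ^{1/2+1/N}_∞({x : f(x) = g(x)}) < 1/M for every g : [0,1] → ℝ with total variation Var(g) ≤ 1, contains a dense open subset of C[0,1]. -/
open MeasureTheory Set ENNReal

noncomputable section

/-- The `d`-dimensional Hausdorff content (capacity) of a set of reals. -/
def hContent (d : ℝ) (H : Set ℝ) : ℝ≥0∞ :=
  ⨅ (t : ℕ → Set ℝ) (_ : H ⊆ ⋃ i, t i) (_ : ∀ i, ∃ a b : ℝ, t i = Set.Icc a b),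
    ∑' i, ⨆ (_ : (t i).Nonempty), EMetric.diam (t i) ^ d

/-!
Near any continuous function lies a function `f₀` that is steep, with slope `K` of order `n`, on
each of `n` equal closed subintervals of `[0,1]`: a Lipschitz approximation plus a small sawtooth
with `n` teeth. If `‖f - f₀‖ < 1/(2n)` and `f = g` at two points of one subinterval, steepness
bounds their distance by `(V + 1/n)/K`, where `V` is the variation of `g` on that subinterval;
these variations add up to at most `1`. Covering the coincidence set by one interval per
subinterval and using concavity of `t ↦ t ^ e` for `e = min d 1`, its `d`-content is at most
`n (2/(nK)) ^ e ≈ n ^ (1 - 2e)`, which is small because `e > 1/2`. Being within `1/(2n)` of such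
an `f₀` is an open condition, and these neighbourhoods are dense.
-/

open Filter Topology Finset

theorem eVariationOn.sum_le_biUnion {α E : Type*} [LinearOrder α] [PseudoEMetricSpace E]
    (f : α → E) {s : ℕ → Set α} (hs : ∀ i j, i < j → ∀ x ∈ s i, ∀ y ∈ s j, x ≤ y) (n : ℕ) :
    ∑ i ∈ range n, eVariationOn f (s i) ≤ eVariationOn f (⋃ i ∈ range n, s i) := by
  induction n with
  | zero => simp
  | succ n ih =>
    rw [sum_range_succ, range_add_one, set_biUnion_insert, union_comm]
    refine (add_le_add_left ih _).trans (eVariationOn.add_le_union f ?_)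
    simp only [mem_iUnion, Finset.mem_range]
    rintro x ⟨i, hi, hx⟩ y hy
    exact hs i n hi x hx y hy

theorem Real.sum_rpow_le_card_mul_rpow {ι : Type*} (s : Finset ι) {ℓ : ι → ℝ} {e L : ℝ}
    (he₀ : 0 ≤ e) (he₁ : e ≤ 1) (hℓ : ∀ i ∈ s, 0 ≤ ℓ i) (hL : ∑ i ∈ s, ℓ i ≤ L) :
    ∑ i ∈ s, ℓ i ^ e ≤ #s * (L / #s) ^ e := by
  rcases s.eq_empty_or_nonempty with rfl | hs
  · simp
  have hcard : (0 : ℝ) < #s := by exact_mod_cast hs.card_pos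
  have jensen : ∑ i ∈ s, (#s : ℝ)⁻¹ • ℓ i ^ e ≤ (∑ i ∈ s, (#s : ℝ)⁻¹ • ℓ i) ^ e :=
    (Real.concaveOn_rpow he₀ he₁).le_map_sum (fun _ _ => by positivity)
      (by simp [hcard.ne']) hℓ
  simp only [smul_eq_mul, ← mul_sum] at jensen
  calc ∑ i ∈ s, ℓ i ^ e = #s * ((#s : ℝ)⁻¹ * ∑ i ∈ s, ℓ i ^ e) := by field_simp
    _ ≤ #s * (L / #s) ^ e := by
      gcongr
      refine jensen.trans (Real.rpow_le_rpow (by positivity [sum_nonneg hℓ]) ?_ he₀)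
      rw [inv_mul_eq_div]
      gcongr

theorem tendsto_mul_rpow_div_sq_atTop {c e : ℝ} (hc : 0 ≤ c) (he : 1 / 2 < e) :
    Tendsto (fun x : ℝ => x * (c / x ^ 2) ^ e) atTop (𝓝 0) := by
  have h := (tendsto_rpow_neg_atTop (by linarith : 0 < 2 * e - 1)).const_mul (c ^ e)
  rw [mul_zero] at h
  refine h.congr' ?_
  filter_upwards [eventually_gt_atTop 0] with x hx
  rw [Real.div_rpow hc (by positivity), ← Real.rpow_natCast, ← Real.rpow_mul hx.le, neg_sub,
    Real.rpow_sub hx, Real.rpow_one]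
  push_cast
  ring

theorem hContent_le_tsum_ediam (d : ℝ) {E : Set ℝ} {S : ℕ → Set ℝ}
    (hS : ∀ i, Bornology.IsBounded (S i)) (hE : E ⊆ ⋃ i, S i) :
    hContent d E ≤ ∑' i, Metric.ediam (S i) ^ d := by
  refine iInf₂_le_of_le (fun i => Icc (sInf (S i)) (sSup (S i)))
    (hE.trans (iUnion_mono fun i => (hS i).subset_Icc_sInf_sSup)) <|
      iInf_le_of_le (fun i => ⟨_, _, rfl⟩) <| ENNReal.tsum_le_tsum fun i => iSup_le fun _ => ?_
  change Metric.ediam (Icc _ _) ^ d ≤ _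
  rw [Real.ediam_Icc, Real.ediam_eq (hS i)]

theorem hContent_le_sum_ediam {d : ℝ} (hd : 0 < d) {E : Set ℝ} {S : ℕ → Set ℝ} {n : ℕ}
    (hS : ∀ i < n, Bornology.IsBounded (S i)) (hE : E ⊆ ⋃ i < n, S i) :
    hContent d E ≤ ∑ i ∈ range n, Metric.ediam (S i) ^ d := by
  classical
  let S' : ℕ → Set ℝ := fun i => if i < n then S i else ∅
  calc hContent d E ≤ ∑' i, Metric.ediam (S' i) ^ d := by
        refine hContent_le_tsum_ediam d (fun i => ?_) fun x hx => ?_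
        · by_cases hi : i < n <;> simp [S', hi, hS]
        · obtain ⟨i, hi, hx⟩ := mem_iUnion₂.1 (hE hx)
          exact mem_iUnion.2 ⟨i, by simpa [S', hi] using hx⟩
    _ = ∑ i ∈ range n, Metric.ediam (S i) ^ d := by
        rw [tsum_eq_sum (s := range n) fun i hi => by
          simp [S', Finset.mem_range.not.1 hi, hd]]
        exact sum_congr rfl fun i hi => by simp [S', Finset.mem_range.1 hi]

def piece (n i : ℕ) : Set I01 := Subtype.val ⁻¹' Icc ((i : ℝ) / n) ((i + 1) / n)

theorem exists_mem_piece {n : ℕ} (hn : 0 < n) (x : I01) : ∃ i < n, x ∈ piece n i := by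
  have hn' : (0 : ℝ) < n := by exact_mod_cast hn
  obtain ⟨hx₀, hx₁⟩ := x.2
  rcases hx₁.lt_or_eq with hx₁ | hx₁
  · refine ⟨⌊(x : ℝ) * n⌋₊, (Nat.floor_lt (by positivity)).2 (by nlinarith), ?_, ?_⟩
    · exact (div_le_iff₀ hn').2 (Nat.floor_le (by positivity))
    · exact (le_div_iff₀ hn').2 (Nat.lt_floor_add_one _).le
  · refine ⟨n - 1, Nat.sub_lt hn one_pos, ?_, ?_⟩ <;>
      simp [hx₁, Nat.cast_pred hn, div_le_one hn', hn'.ne']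

theorem le_of_mem_piece {n i j : ℕ} (hij : i < j) {x y : I01} (hx : x ∈ piece n i)
    (hy : y ∈ piece n j) : x ≤ y := by
  have hij' : (i : ℝ) + 1 ≤ j := by exact_mod_cast hij
  calc (x : ℝ) ≤ (i + 1) / n := hx.2
    _ ≤ j / n := by gcongr
    _ ≤ y := hy.1

theorem sum_toReal_eVariationOn_piece_le {g : I01 → ℝ} (hg : eVariationOn g univ ≤ 1) (n : ℕ) :
    ∑ i ∈ range n, (eVariationOn g (piece n i)).toReal ≤ 1 := by
  have hsum : ∑ i ∈ range n, eVariationOn g (piece n i) ≤ 1 :=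
    ((eVariationOn.sum_le_biUnion g (fun _ _ hij _ hx _ hy => le_of_mem_piece hij hx hy) n).trans
      (eVariationOn.mono g (subset_univ _))).trans hg
  rw [← ENNReal.toReal_sum fun i _ => ne_top_of_le_ne_top one_ne_top
    ((eVariationOn.mono g (subset_univ _)).trans hg)]
  simpa using ENNReal.toReal_mono one_ne_top hsum

theorem hContent_image_le_sum_ediam_piece {d : ℝ} (hd : 0 < d) {n : ℕ} (hn : 0 < n)
    (A : Set I01) :
    hContent d (Subtype.val '' A) ≤
      ∑ i ∈ range n, Metric.ediam (Subtype.val '' (piece n i ∩ A)) ^ d := by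
  refine hContent_le_sum_ediam hd (fun i _ => (Metric.isBounded_Icc (0 : ℝ) 1).subset
    (image_subset_iff.2 fun x _ => x.2)) ?_
  rintro _ ⟨x, hx, rfl⟩
  obtain ⟨i, hi, hxi⟩ := exists_mem_piece hn x
  exact mem_iUnion₂.2 ⟨i, hi, x, ⟨hxi, hx⟩, rfl⟩

def SteepOn {α : Type*} [PseudoMetricSpace α] (f : α → ℝ) (s : Set α) (K : ℝ) : Prop :=
  ∀ x ∈ s, ∀ y ∈ s, K * dist x y ≤ dist (f x) (f y)

theorem SteepOn.weaken {α : Type*} [PseudoMetricSpace α] {f : α → ℝ} {s : Set α} {K K' : ℝ}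
    (hf : SteepOn f s K) (h : K' ≤ K) : SteepOn f s K' := fun x hx y hy =>
  (mul_le_mul_of_nonneg_right h dist_nonneg).trans (hf x hx y hy)

theorem SteepOn.add_lipschitzWith {α : Type*} [PseudoMetricSpace α] {f g : α → ℝ} {s : Set α}
    {K : ℝ} {L : NNReal} (hf : SteepOn f s K) (hg : LipschitzWith L g) :
    SteepOn (f + g) s (K - L) := fun x hx y hy => by
  have hfg : dist (f x) (f y) ≤ dist ((f + g) x) ((f + g) y) + dist (g x) (g y) := by
    simp only [Pi.add_apply, Real.dist_eq]
    calc |f x - f y| = |(f x + g x - (f y + g y)) - (g x - g y)| := by ring_nf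
      _ ≤ _ := abs_sub _ _
  nlinarith [hf x hx y hy, hg.dist_le_mul x y]

theorem SteepOn.ediam_inter_eq_le {α : Type*} [PseudoMetricSpace α] {f f₀ g : α → ℝ}
    {s : Set α} {K δ V : ℝ} (hf₀ : SteepOn f₀ s K) (hK : 0 < K)
    (hf : ∀ x, dist (f x) (f₀ x) ≤ δ) (hg : ∀ x ∈ s, ∀ y ∈ s, dist (g x) (g y) ≤ V) :
    Metric.ediam (s ∩ {x | f x = g x}) ≤ ENNReal.ofReal ((V + 2 * δ) / K) := by
  refine Metric.ediam_le fun x hx y hy => ?_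
  rw [edist_dist]
  refine ENNReal.ofReal_le_ofReal ?_
  rw [le_div_iff₀' hK]
  calc K * dist x y ≤ dist (f₀ x) (f₀ y) := hf₀ x hx.1 y hy.1
    _ ≤ dist (f₀ x) (f x) + dist (f x) (f y) + dist (f y) (f₀ y) := dist_triangle4 _ _ _ _
    _ ≤ δ + V + δ := by
      have hxy : dist (f x) (f y) ≤ V := by rw [hx.2, hy.2]; exact hg x hx.1 y hy.1
      linarith [hf x, hf y, dist_comm (f₀ x) (f x)]
    _ = V + 2 * δ := by ring

def sawtooth (u : ℝ) : ℝ := Metric.infDist u (range ((↑) : ℤ → ℝ))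

theorem sawtooth_le_half (u : ℝ) : sawtooth u ≤ 1 / 2 :=
  (Metric.infDist_le_dist_of_mem (mem_range_self (round u))).trans (abs_sub_round u)

theorem sawtooth_eq_abs_sub {u : ℝ} {k : ℤ} (hk : |u - k| ≤ 1 / 2) : sawtooth u = |u - k| := by
  refine le_antisymm (Metric.infDist_le_dist_of_mem (mem_range_self k)) ?_
  refine (Metric.le_infDist (range_nonempty _)).2 ?_
  rintro _ ⟨z, rfl⟩
  rw [Real.dist_eq]
  rcases eq_or_ne z k with rfl | hz
  · rfl
  have hzk : (1 : ℝ) ≤ |(z : ℝ) - k| := by exact_mod_cast Int.one_le_abs (sub_ne_zero.2 hz)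
  have := abs_sub_le (z : ℝ) u k
  rw [abs_sub_comm (z : ℝ) u] at this
  linarith

theorem abs_sawtooth_sub_of_mem_Icc {j : ℤ} {u v : ℝ} (hu : u ∈ Icc ((j : ℝ) / 2) ((j + 1) / 2))
    (hv : v ∈ Icc ((j : ℝ) / 2) ((j + 1) / 2)) : |sawtooth u - sawtooth v| = |u - v| := by
  obtain ⟨hu₁, hu₂⟩ := hu
  obtain ⟨hv₁, hv₂⟩ := hv
  rcases Int.even_or_odd' j with ⟨k, rfl | rfl⟩ <;> push_cast at hu₁ hu₂ hv₁ hv₂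
  · rw [sawtooth_eq_abs_sub (k := k) (abs_le.2 ⟨by linarith, by linarith⟩),
      sawtooth_eq_abs_sub (k := k) (abs_le.2 ⟨by linarith, by linarith⟩),
      abs_of_nonneg (a := u - k) (by linarith), abs_of_nonneg (a := v - k) (by linarith)]
    ring_nf
  · rw [sawtooth_eq_abs_sub (k := k + 1)
        (abs_le.2 ⟨by push_cast; linarith, by push_cast; linarith⟩),
      sawtooth_eq_abs_sub (k := k + 1)
        (abs_le.2 ⟨by push_cast; linarith, by push_cast; linarith⟩),
      abs_of_nonpos (a := u - _) (by push_cast; linarith),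
      abs_of_nonpos (a := v - _) (by push_cast; linarith), abs_sub_comm]
    ring_nf

def sawtoothMap (a : ℝ) (m : ℕ) : C(I01, ℝ) :=
  ⟨fun x => a * sawtooth (m * x / 2),
    continuous_const.mul ((Metric.continuous_infDist_pt _).comp (by fun_prop))⟩

theorem norm_sawtoothMap_le {a : ℝ} (ha : 0 ≤ a) (m : ℕ) : ‖sawtoothMap a m‖ ≤ a / 2 := by
  refine (ContinuousMap.norm_le _ (by positivity)).2 fun x => ?_
  have h₀ : 0 ≤ sawtooth (m * x / 2) := Metric.infDist_nonneg
  have h₁ := sawtooth_le_half (m * x / 2)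
  change |a * sawtooth (m * x / 2)| ≤ a / 2
  rw [abs_of_nonneg (mul_nonneg ha h₀)]
  exact (mul_le_mul_of_nonneg_left h₁ ha).trans_eq (by ring)

theorem steepOn_sawtoothMap {a : ℝ} (ha : 0 ≤ a) {m : ℕ} (hm : 0 < m) (i : ℕ) :
    SteepOn (sawtoothMap a m) (piece m i) (a * m / 2) := fun x hx y hy => by
  have hm' : (0 : ℝ) < m := by exact_mod_cast hm
  have mem : ∀ z ∈ piece m i, (m * z / 2 : ℝ) ∈ Icc (((i : ℤ) : ℝ) / 2) (((i : ℤ) + 1) / 2) :=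
    fun z ⟨hz₁, hz₂⟩ => by
      push_cast
      constructor
      · have := (div_le_iff₀ hm').1 hz₁; linarith
      · have := (le_div_iff₀ hm').1 hz₂; linarith
  have key := abs_sawtooth_sub_of_mem_Icc (mem x hx) (mem y hy)
  refine ge_of_eq ?_
  simp only [sawtoothMap, ContinuousMap.coe_mk, Real.dist_eq, Subtype.dist_eq, ← mul_sub,
    abs_mul, abs_of_nonneg ha, key]
  rw [show (m * x / 2 - m * y / 2 : ℝ) = m / 2 * (x - y) by ring, abs_mul,
    abs_of_pos (by positivity)]
  ring

theorem exists_lipschitzWith_near (f : C(I01, ℝ)) {ε : ℝ} (hε : 0 < ε) :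
    ∃ p : C(I01, ℝ), ∃ L, LipschitzWith L p ∧ dist f p < ε := by
  obtain ⟨q, hq⟩ := exists_polynomial_near_continuousMap 0 1 f ε hε
  obtain ⟨L, hL⟩ := (Polynomial.contDiff_aeval q 1).locallyLipschitz.locallyLipschitzOn
    |>.exists_lipschitzOnWith_of_compact (isCompact_Icc : IsCompact I01)
  exact ⟨q.toContinuousMapOn I01, L, hL.to_restrict, by rwa [dist_comm, dist_eq_norm]⟩

theorem eventually_exists_steep_near (f : C(I01, ℝ)) {ε : ℝ} (hε : 0 < ε) :
    ∀ᶠ m : ℕ in atTop, ∃ f₀ : C(I01, ℝ),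
      dist f f₀ < ε ∧ ∀ i < m, SteepOn f₀ (piece m i) (ε * m / 8) := by
  obtain ⟨p, L, hp, hfp⟩ := exists_lipschitzWith_near f (half_pos hε)
  filter_upwards [eventually_gt_atTop 0,
    tendsto_natCast_atTop_atTop.eventually_ge_atTop (8 * L / ε)] with m hm hmL
  refine ⟨sawtoothMap (ε / 2) m + p, ?_, fun i _ => ?_⟩
  · calc dist f (sawtoothMap (ε / 2) m + p)
        ≤ dist f p + ‖sawtoothMap (ε / 2) m‖ := by
          rw [← dist_add_self_right p]; exact dist_triangle _ _ _
      _ ≤ ε / 2 + ε / 2 / 2 := add_le_add hfp.le (norm_sawtoothMap_le (by positivity) m)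
      _ < ε := by linarith
  · have hL : (L : ℝ) ≤ ε * m / 8 := by rw [div_le_iff₀ hε] at hmL; linarith
    rw [ContinuousMap.coe_add]
    exact ((steepOn_sawtoothMap (by positivity) hm i).add_lipschitzWith hp).weaken (by linarith)

theorem SteepOn.ediam_image_coincidence_le {f f₀ : C(I01, ℝ)} {s : Set I01} {K δ : ℝ}
    (hf₀ : SteepOn f₀ s K) (hK : 0 < K) (hf : dist f f₀ ≤ δ) {g : I01 → ℝ}
    (hg : eVariationOn g s ≠ ⊤) :
    Metric.ediam (Subtype.val '' (s ∩ {x | f x = g x})) ≤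
      ENNReal.ofReal (((eVariationOn g s).toReal + 2 * δ) / K) := by
  rw [isometry_subtype_coe.ediam_image]
  refine hf₀.ediam_inter_eq_le hK (fun x => (ContinuousMap.dist_apply_le_dist x).trans hf)
    fun x hx y hy => ?_
  rw [dist_edist]
  exact ENNReal.toReal_mono hg (eVariationOn.edist_le g hx hy)

theorem hContent_coincidence_le {d e : ℝ} (hd : 0 < d) (he₀ : 0 ≤ e) (he₁ : e ≤ 1) (hed : e ≤ d)
    {f f₀ : C(I01, ℝ)} {n : ℕ} {K : ℝ} (hn : 0 < n) (hK : 2 ≤ K)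
    (hf₀ : ∀ i < n, SteepOn f₀ (piece n i) K) (hf : dist f f₀ < 1 / (2 * n))
    {g : I01 → ℝ} (hg : eVariationOn g univ ≤ 1) :
    hContent d (Subtype.val '' {x | f x = g x}) ≤ ENNReal.ofReal (n * (2 / (n * K)) ^ e) := by
  have hV : ∀ i, eVariationOn g (piece n i) ≤ 1 :=
    fun i => (eVariationOn.mono g (subset_univ _)).trans hg
  set V : ℕ → ℝ := fun i => (eVariationOn g (piece n i)).toReal
  set ℓ : ℕ → ℝ := fun i => (V i + 2 * (1 / (2 * n))) / K
  have hℓ₀ : ∀ i, 0 ≤ ℓ i := fun i => by positivity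
  have hℓ₁ : ∀ i, ℓ i ≤ 1 := fun i => by
    have : V i ≤ 1 := by simpa using ENNReal.toReal_mono one_ne_top (hV i)
    have : 2 * (1 / (2 * (n : ℝ))) ≤ 1 := by
      rw [mul_one_div, div_le_one (by positivity)]
      linarith [(by exact_mod_cast hn : (1 : ℝ) ≤ n)]
    rw [div_le_one (by linarith)]
    linarith
  have hℓsum : ∑ i ∈ range n, ℓ i ≤ 2 / K := by
    simp only [ℓ, ← sum_div, sum_add_distrib, sum_const, card_range, nsmul_eq_mul]
    have := sum_toReal_eVariationOn_piece_le hg n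
    gcongr
    field_simp
    linarith
  have hdiam : ∀ i < n, Metric.ediam (Subtype.val '' (piece n i ∩ {x | f x = g x})) ≤
      ENNReal.ofReal (ℓ i) := fun i hi =>
    (hf₀ i hi).ediam_image_coincidence_le (by linarith) hf.le
      (ne_top_of_le_ne_top one_ne_top (hV i))
  calc hContent d (Subtype.val '' {x | f x = g x})
      ≤ ∑ i ∈ range n, Metric.ediam (Subtype.val '' (piece n i ∩ {x | f x = g x})) ^ d :=
        hContent_image_le_sum_ediam_piece hd hn _
    _ ≤ ∑ i ∈ range n, ENNReal.ofReal (ℓ i ^ e) := sum_le_sum fun i hi => calc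
        _ ≤ ENNReal.ofReal (ℓ i) ^ d :=
          ENNReal.rpow_le_rpow (hdiam i (Finset.mem_range.1 hi)) hd.le
        _ ≤ ENNReal.ofReal (ℓ i) ^ e :=
          ENNReal.rpow_le_rpow_of_exponent_ge (ENNReal.ofReal_le_one.2 (hℓ₁ i)) hed
        _ = _ := ENNReal.ofReal_rpow_of_nonneg (hℓ₀ i) he₀
    _ = ENNReal.ofReal (∑ i ∈ range n, ℓ i ^ e) :=
        (ENNReal.ofReal_sum_of_nonneg fun i _ => by positivity).symm
    _ ≤ ENNReal.ofReal (n * (2 / (n * K)) ^ e) := ENNReal.ofReal_le_ofReal <| by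
        simpa [div_div, mul_comm K] using
          Real.sum_rpow_le_card_mul_rpow (range n) he₀ he₁ (fun i _ => hℓ₀ i) hℓsum

def steepNbhd (e : ℝ) (η : ℝ≥0∞) : Set C(I01, ℝ) :=
  ⋃ (f₀ : C(I01, ℝ)) (n : ℕ) (K : ℝ) (_ : 0 < n ∧ 2 ≤ K ∧ (∀ i < n, SteepOn f₀ (piece n i) K) ∧
    ENNReal.ofReal (n * (2 / (n * K)) ^ e) < η), Metric.ball f₀ (1 / (2 * n))

theorem isOpen_steepNbhd (e : ℝ) (η : ℝ≥0∞) : IsOpen (steepNbhd e η) :=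
  isOpen_iUnion fun _ => isOpen_iUnion fun _ => isOpen_iUnion fun _ => isOpen_iUnion fun _ =>
    Metric.isOpen_ball

theorem dense_steepNbhd {e : ℝ} (he : 1 / 2 < e) {η : ℝ≥0∞} (hη : 0 < η) :
    Dense (steepNbhd e η) := by
  refine Metric.dense_iff.2 fun f ε hε => ?_
  have hsmall : ∀ᶠ m : ℕ in atTop, ENNReal.ofReal (m * (2 / (m * (ε * m / 8))) ^ e) < η := by
    have h := ENNReal.tendsto_ofReal <| (tendsto_mul_rpow_div_sq_atTop
      (c := 16 / ε) (by positivity) he).comp tendsto_natCast_atTop_atTop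
    rw [ENNReal.ofReal_zero] at h
    refine (h.eventually_lt_const hη).mono fun m hm => ?_
    rwa [show 2 / (m * (ε * m / 8)) = 16 / ε / (m : ℝ) ^ 2 by ring]
  obtain ⟨m, ⟨f₀, hff₀, hf₀⟩, hm, hmε, hmη⟩ := ((eventually_exists_steep_near f hε).and
    ((eventually_gt_atTop 0).and ((tendsto_natCast_atTop_atTop.eventually_ge_atTop (16 / ε)).and
      hsmall))).exists
  have hK : 2 ≤ ε * m / 8 := by rw [div_le_iff₀ hε] at hmε; linarith
  refine ⟨f₀, by rwa [Metric.mem_ball, dist_comm], ?_⟩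
  simp only [steepNbhd, mem_iUnion]
  exact ⟨f₀, m, ε * m / 8, ⟨hm, hK, hf₀, hmη⟩, Metric.mem_ball_self (by positivity)⟩

theorem hContent_coincidence_lt_of_mem_steepNbhd {d e : ℝ} (hd : 0 < d) (he₀ : 0 ≤ e)
    (he₁ : e ≤ 1) (hed : e ≤ d) {η : ℝ≥0∞} {f : C(I01, ℝ)} (hf : f ∈ steepNbhd e η)
    {g : I01 → ℝ} (hg : eVariationOn g univ ≤ 1) :
    hContent d (Subtype.val '' {x | f x = g x}) < η := by
  simp only [steepNbhd, mem_iUnion] at hf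
  obtain ⟨f₀, n, K, ⟨hn, hK, hf₀, hη⟩, hff₀⟩ := hf
  exact (hContent_coincidence_le hd he₀ he₁ hed hn hK hf₀ hff₀ hg).trans_lt hη

theorem stmt15_general (N M : ℕ) (hN : 0 < N) :
    ∃ U : Set C(I01, ℝ), IsOpen U ∧ Dense U ∧
      U ⊆ { f : C(I01, ℝ) | ∀ g : I01 → ℝ,
        eVariationOn g Set.univ ≤ 1 →
        hContent (1 / 2 + 1 / N) (Subtype.val '' {x : I01 | f x = g x}) <
          1 / M } := by
  have hN' : (0 : ℝ) < 1 / N := one_div_pos.2 (by exact_mod_cast hN)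
  have he : 1 / 2 < min (1 / 2 + 1 / N : ℝ) 1 := lt_min (by linarith) (by norm_num)
  refine ⟨steepNbhd (min (1 / 2 + 1 / N) 1) (1 / M), isOpen_steepNbhd _ _,
    dense_steepNbhd he (by simp), fun f hf g hg => ?_⟩
  exact hContent_coincidence_lt_of_mem_steepNbhd (by positivity) (by linarith) (min_le_right _ _)
    (min_le_left _ _) hf hg

/-- For all positive integers `N, M`, the set of `f ∈ C[0,1]` such that
`ℋ^{1/2+1/N}_∞({f = g}) < 1/M` for every `g` with total variation at most `1`
contains a dense open subset of `C[0,1]`. -/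
theorem stmt15 (N M : ℕ) (hN : 0 < N) (hM : 0 < M) :
    ∃ U : Set C(I01, ℝ), IsOpen U ∧ Dense U ∧
      U ⊆ { f : C(I01, ℝ) | ∀ g : I01 → ℝ,
        eVariationOn g Set.univ ≤ 1 →
        hContent (1 / 2 + 1 / N) (Subtype.val '' {x : I01 | f x = g x}) <
          1 / M } :=
  stmt15_general N M hN
end
end

section
/- Let g : [0,1] → ℝ have total variation Var(g) ≤ 1, and suppose [0,1] is partitioned into m blocks, each subdivided into k intervals of length 1/(mk), such that whenever g agrees somewhere (outside a fixed exceptional open set) with a function f on two distinct subintervals of the same block, g must vary by at least δ > 0 between them. If l_i denotes the number of subintervals of block i meeting {f = g} outside the exceptional set, then Σ_{i} l_i ≤ m + 1/δ. -/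
/-!
Pick a point of the agreement set in each subinterval that meets it. Inside a block these points
increase, and `g` jumps by at least `δ` between any two of them, so a block in which `l` subintervals
meet the agreement set carries variation at least `(l - 1) δ`. Blocks are ordered, so their
variations add up to at most `Var(g) ≤ 1`, whence `∑ (lᵢ - 1) ≤ 1 / δ`.
-/

open Set Classical

noncomputable section

/-- The `j`-th subinterval of the `i`-th block in the partition of `[0,1]` into
`m` blocks of `k` subintervals of length `1/(mk)` each. -/
def subInt (m k i j : ℕ) : Set I01 :=
  {x : I01 | ((i * k + j : ℕ) : ℝ) / (m * k) ≤ x.1 ∧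
    x.1 < ((i * k + j + 1 : ℕ) : ℝ) / (m * k)}

open scoped ENNReal

namespace eVariationOn

variable {α E : Type*} [LinearOrder α] [PseudoEMetricSpace E]

theorem sum_le_biUnion_s19 (f : α → E) (s : ℕ → Set α)
    (hs : ∀ i j, i < j → ∀ x ∈ s i, ∀ y ∈ s j, x ≤ y) (m : ℕ) :
    ∑ i ∈ Finset.range m, eVariationOn f (s i) ≤ eVariationOn f (⋃ i < m, s i) := by
  induction m with
  | zero => simp
  | succ m ih =>
    rw [Finset.sum_range_succ, Set.biUnion_lt_succ]
    refine (add_le_add_left ih _).trans (add_le_union f ?_)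
    simp only [Set.mem_iUnion]
    rintro x ⟨i, hi, hx⟩ y hy
    exact hs i m hi x hx y hy

theorem nsmul_le_of_separated (f : α → E) {s : Set α} {A : Finset α} (hAs : ↑A ⊆ s)
    {δ : ℝ≥0∞} (hsep : ∀ x ∈ A, ∀ y ∈ A, x ≠ y → δ ≤ edist (f x) (f y)) :
    (A.card - 1) • δ ≤ eVariationOn f s := by
  rcases A.eq_empty_or_nonempty with rfl | hA
  · simp
  set n := A.card
  have hn : 0 < n := hA.card_pos
  let e := A.orderEmbOfFin rfl
  let u : ℕ → α := fun t => e ⟨min t (n - 1), by omega⟩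
  have hu : Monotone u := fun t t' h => e.monotone (Fin.mk_le_mk.mpr (by omega))
  have huA : ∀ t, u t ∈ A := fun t => A.orderEmbOfFin_mem rfl _
  have hstep : ∀ t ∈ Finset.range (n - 1), δ ≤ edist (f (u (t + 1))) (f (u t)) := by
    intro t ht
    refine hsep _ (huA _) _ (huA _) fun h => ?_
    have := e.injective h
    simp only [Fin.mk.injEq, Finset.mem_range] at this ht
    omega
  calc (n - 1) • δ = (Finset.range (n - 1)).card • δ := by rw [Finset.card_range]
    _ ≤ ∑ t ∈ Finset.range (n - 1), edist (f (u (t + 1))) (f (u t)) :=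
      Finset.card_nsmul_le_sum _ _ _ hstep
    _ ≤ eVariationOn f s := sum_le hu fun t => hAs (huA t)

end eVariationOn

theorem subInt_lt {m k i j i' j' : ℕ} (h : i * k + j < i' * k + j') {x y : I01}
    (hx : x ∈ subInt m k i j) (hy : y ∈ subInt m k i' j') : x < y := by
  have hcast : ((i * k + j + 1 : ℕ) : ℝ) ≤ ((i' * k + j' : ℕ) : ℝ) := by exact_mod_cast h
  refine Subtype.coe_lt_coe.mp <| calc x.1
      _ < ((i * k + j + 1 : ℕ) : ℝ) / (m * k) := hx.2
      _ ≤ ((i' * k + j' : ℕ) : ℝ) / (m * k) := div_le_div_of_nonneg_right hcast (by positivity)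
      _ ≤ y.1 := hy.1

theorem nsmul_le_eVariationOn_block {m k i : ℕ} {δ : ℝ} {g : I01 → ℝ} {E : Set I01}
    (hjump : ∀ j₁ < k, ∀ j₂ < k, j₁ ≠ j₂ →
      ∀ x ∈ E ∩ subInt m k i j₁, ∀ y ∈ E ∩ subInt m k i j₂, δ ≤ |g x - g y|) :
    (((Finset.range k).filter fun j => (E ∩ subInt m k i j).Nonempty).card - 1) •
      ENNReal.ofReal δ ≤ eVariationOn g (⋃ j < k, subInt m k i j) := by
  set J := (Finset.range k).filter fun j => (E ∩ subInt m k i j).Nonempty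
  have hJ : ∀ j ∈ J, j < k ∧ (E ∩ subInt m k i j).Nonempty := by
    intro j hj; simpa [J] using hj
  choose! x hx using fun j hj => (hJ j hj).2
  have hinj : Set.InjOn x J := by
    intro j₁ hj₁ j₂ hj₂ h
    by_contra hne
    rcases Nat.lt_or_gt_of_ne hne with hlt | hlt
    · exact (subInt_lt (by omega) (hx j₁ hj₁).2 (hx j₂ hj₂).2).ne h
    · exact (subInt_lt (by omega) (hx j₂ hj₂).2 (hx j₁ hj₁).2).ne h.symm
  rw [← Finset.card_image_of_injOn hinj]
  refine eVariationOn.nsmul_le_of_separated g ?_ ?_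
  · intro y hy
    obtain ⟨j, hj, rfl⟩ := Finset.mem_image.mp hy
    exact Set.mem_biUnion (hJ j hj).1 (hx j hj).2
  · simp only [Finset.mem_image]
    rintro _ ⟨j₁, hj₁, rfl⟩ _ ⟨j₂, hj₂, rfl⟩ hne
    rw [edist_dist, Real.dist_eq]
    exact ENNReal.ofReal_le_ofReal <| hjump j₁ (hJ j₁ hj₁).1 j₂ (hJ j₂ hj₂).1
      (fun h => hne (h ▸ rfl)) _ (hx j₁ hj₁) _ (hx j₂ hj₂)

theorem iUnion_subInt_le {m k i i' : ℕ} (hi : i < i') {x y : I01}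
    (hx : x ∈ ⋃ j < k, subInt m k i j) (hy : y ∈ ⋃ j < k, subInt m k i' j) : x ≤ y := by
  simp only [Set.mem_iUnion] at hx hy
  obtain ⟨j, hj, hx⟩ := hx
  obtain ⟨j', -, hy⟩ := hy
  have : (i + 1) * k ≤ i' * k := Nat.mul_le_mul_right k hi
  exact (subInt_lt (by rw [add_mul] at this; omega) hx hy).le

theorem cast_sum_le_add_one_div {m : ℕ} {l : ℕ → ℕ} {δ : ℝ} (hδ : 0 < δ)
    (h : (∑ i ∈ Finset.range m, (l i - 1)) • ENNReal.ofReal δ ≤ 1) :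
    ((∑ i ∈ Finset.range m, l i : ℕ) : ℝ) ≤ m + 1 / δ := by
  have hexcess : ((∑ i ∈ Finset.range m, (l i - 1) : ℕ) : ℝ) ≤ 1 / δ := by
    rwa [le_div_iff₀ hδ, ← ENNReal.ofReal_le_one, ENNReal.ofReal_mul (Nat.cast_nonneg _),
      ENNReal.ofReal_natCast, ← nsmul_eq_mul]
  have hsplit : ∑ i ∈ Finset.range m, l i ≤ m + ∑ i ∈ Finset.range m, (l i - 1) :=
    calc ∑ i ∈ Finset.range m, l i ≤ ∑ i ∈ Finset.range m, (1 + (l i - 1)) :=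
          Finset.sum_le_sum fun i _ => le_add_tsub
      _ = m + ∑ i ∈ Finset.range m, (l i - 1) := by simp [Finset.sum_add_distrib]
  calc ((∑ i ∈ Finset.range m, l i : ℕ) : ℝ)
      ≤ m + ((∑ i ∈ Finset.range m, (l i - 1) : ℕ) : ℝ) := by exact_mod_cast hsplit
    _ ≤ m + 1 / δ := by gcongr

theorem stmt19_general (m k : ℕ) (δ : ℝ) (hδ : 0 < δ) (g : I01 → ℝ)
    (hVar : eVariationOn g Set.univ ≤ 1) (E : Set I01)
    (hjump : ∀ i < m, ∀ j₁ < k, ∀ j₂ < k, j₁ ≠ j₂ →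
      ∀ x ∈ E ∩ subInt m k i j₁, ∀ y ∈ E ∩ subInt m k i j₂, δ ≤ |g x - g y|) :
    ((∑ i ∈ Finset.range m,
        ((Finset.range k).filter fun j => (E ∩ subInt m k i j).Nonempty).card : ℕ) : ℝ)
      ≤ m + 1 / δ := by
  refine cast_sum_le_add_one_div hδ ?_
  rw [Finset.sum_smul]
  calc _ ≤ ∑ i ∈ Finset.range m, eVariationOn g (⋃ j < k, subInt m k i j) :=
        Finset.sum_le_sum fun i hi =>
          nsmul_le_eVariationOn_block (hjump i (Finset.mem_range.mp hi))
    _ ≤ eVariationOn g (⋃ i < m, ⋃ j < k, subInt m k i j) :=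
        eVariationOn.sum_le_biUnion_s19 g _ (fun _ _ hi _ hx _ hy => iUnion_subInt_le hi hx hy) m
    _ ≤ 1 := (eVariationOn.mono g (Set.subset_univ _)).trans hVar

/-- The counting estimate: if `g` has variation at most `1` and agreement of `f` and
`g` (outside an exceptional set `U`) on two distinct subintervals of a block forces
`g` to vary by at least `δ` between them, then the total number of subintervals
meeting the agreement set is at most `m + 1/δ`. -/
theorem stmt19 (m k : ℕ) (hm : 0 < m) (hk : 0 < k) (δ : ℝ) (hδ : 0 < δ)
    (f g : I01 → ℝ) (U : Set ℝ) (hU : IsOpen U)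
    (hVar : eVariationOn g Set.univ ≤ 1)
    (E : Set I01) (hE : E = {x : I01 | f x = g x ∧ x.1 ∉ U})
    (hjump : ∀ i < m, ∀ j₁ < k, ∀ j₂ < k, j₁ ≠ j₂ →
      ∀ x ∈ E ∩ subInt m k i j₁, ∀ y ∈ E ∩ subInt m k i j₂, δ ≤ |g x - g y|) :
    ((∑ i ∈ Finset.range m,
        ((Finset.range k).filter fun j => (E ∩ subInt m k i j).Nonempty).card : ℕ) : ℝ)
      ≤ m + 1 / δ :=
  stmt19_general m k δ hδ g hVar E hjump
end
end
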